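/- arXiv:quant-ph/9811046 — 5 statements merged into one kernel-verified Lean document; each statement's English description precedes it below -/
import Mathlib

section
/- If q is a real polynomial of degree d such that |q(x)| ≤ c for all x in [-1,1], then |q(x)| ≤ c·|T_d(x)| for all x with |x| ≥ 1, where T_d is the degree-d Chebyshev polynomial of the first kind. -/
/-!
Lagrange interpolation at the extrema `cos (kπ/d)` of `T_d` expresses `q(x)`, for `x ≥ 1`, as a
combination of the values of `q` at these nodes whose coefficients alternate in sign exactly as
the values `±1` of `T_d` there; hence `|q| ≤ 1` on `[-1, 1]` forces `q(x) ≤ T_d(x)`. This is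
Mathlib's `Polynomial.Chebyshev.eval_iterate_derivative_le_of_forall_abs_le_one` with `k = 0`.
Applying it to `±q` and to `q(-X)` bounds `|q(x)|` for `|x| ≥ 1`, and scaling by `c` finishes.
-/

open Polynomial

namespace Polynomial.Chebyshev

variable {n : ℕ} {P : ℝ[X]}

theorem eval_le_eval_T_real_of_forall_abs_le_one {x : ℝ} (hx : 1 ≤ x) (hPdeg : P.degree ≤ n)
    (hPbnd : ∀ x ∈ Set.Icc (-1) 1, |P.eval x| ≤ 1) : P.eval x ≤ (T ℝ n).eval x :=
  eval_iterate_derivative_le_of_forall_abs_le_one (k := 0) hx hPdeg hPbnd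

theorem abs_eval_le_eval_T_real_of_forall_abs_le_one {x : ℝ} (hx : 1 ≤ x)
    (hPdeg : P.degree ≤ n) (hPbnd : ∀ x ∈ Set.Icc (-1) 1, |P.eval x| ≤ 1) :
    |P.eval x| ≤ (T ℝ n).eval x := by
  have hneg := eval_le_eval_T_real_of_forall_abs_le_one (P := -P) hx (by rwa [degree_neg])
    (by simpa only [eval_neg, abs_neg] using hPbnd)
  rw [eval_neg] at hneg
  exact abs_le.mpr ⟨by linarith, eval_le_eval_T_real_of_forall_abs_le_one hx hPdeg hPbnd⟩

theorem abs_eval_le_abs_eval_T_real_of_forall_abs_le_one {x : ℝ} (hx : 1 ≤ |x|)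
    (hPdeg : P.degree ≤ n) (hPbnd : ∀ x ∈ Set.Icc (-1) 1, |P.eval x| ≤ 1) :
    |P.eval x| ≤ |(T ℝ n).eval x| := by
  wlog! hx₀ : 0 ≤ x
  · have hdeg : (P.comp (-X)).degree ≤ n := degree_le_of_natDegree_le <| by
      rw [natDegree_comp, natDegree_neg, natDegree_X, mul_one]
      exact natDegree_le_of_degree_le hPdeg
    have hbnd : ∀ y ∈ Set.Icc (-1) 1, |(P.comp (-X)).eval y| ≤ 1 := fun y hy => by
      simpa using hPbnd (-y) ⟨by linarith [hy.2], by linarith [hy.1]⟩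
    simpa [T_eval_neg, abs_mul, abs_unit_intCast] using
      this (P := P.comp (-X)) (x := -x) (by rwa [abs_neg]) hdeg hbnd (by linarith)
  exact (abs_eval_le_eval_T_real_of_forall_abs_le_one (by rwa [abs_of_nonneg hx₀] at hx)
    hPdeg hPbnd).trans (le_abs_self _)

end Polynomial.Chebyshev

open Polynomial.Chebyshev in
theorem chebyshev_growth_bound (d : ℕ) (q : Polynomial ℝ) (c : ℝ) (hc : 0 ≤ c)
    (hdeg : q.degree ≤ d)
    (hbound : ∀ x : ℝ, x ∈ Set.Icc (-1 : ℝ) 1 → |q.eval x| ≤ c) :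
    ∀ x : ℝ, 1 ≤ |x| → |q.eval x| ≤ c * |(Polynomial.Chebyshev.T ℝ d).eval x| := by
  intro x hx
  rcases hc.eq_or_lt with rfl | hc
  · have hq : q = 0 := eq_zero_of_infinite_isRoot q <|
      (Set.Icc_infinite (by norm_num : (-1 : ℝ) < 1)).mono
        fun y hy => abs_nonpos_iff.mp (hbound y hy)
    simp [hq]
  have habs_eval : ∀ y, |(C c⁻¹ * q).eval y| ≤ 1 ↔ |q.eval y| ≤ c := fun y => by
    rw [eval_mul, eval_C, abs_mul, abs_inv, abs_of_pos hc, inv_mul_le_iff₀ hc, mul_one]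
  have hscaled := abs_eval_le_abs_eval_T_real_of_forall_abs_le_one (P := C c⁻¹ * q) hx
    ((degree_C_mul (inv_ne_zero hc.ne')).trans_le hdeg)
    fun y hy => (habs_eval y).mpr (hbound y hy)
  rwa [eval_mul, eval_C, abs_mul, abs_inv, abs_of_pos hc, inv_mul_le_iff₀ hc] at hscaled
end

section
/- Let q be a real polynomial of degree d such that |q(x)| ≤ ε·M for all x in [−1,1] (where ε, M > 0), and suppose q(1+μ) = 1 for some μ > 0. Then 1 ≤ ε·M·e^{2d√(2μ+μ²)}. -/
/-!
Rescaled by `(ε * M)⁻¹`, `q` is bounded by `1` on `[-1, 1]`, so by the extremal property of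
Chebyshev polynomials it is dominated by `T_d` on `[1, ∞)`: `1 = q (1 + μ) ≤ ε M T_d (1 + μ)`.
Writing `1 + μ = cosh t`, `T_d (1 + μ) = cosh (d t) ≤ exp (d t)`, and
`t = log (x + √(x² - 1)) ≤ x - 1 + √(x² - 1) ≤ 2 √(x² - 1)` for `x = 1 + μ`.
-/

open Polynomial Polynomial.Chebyshev Real

lemma Real.cosh_le_exp_of_nonneg {x : ℝ} (hx : 0 ≤ x) : cosh x ≤ exp x := by
  have : exp (-x) ≤ exp x := exp_le_exp.2 (by linarith)
  rw [cosh_eq]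
  linarith

lemma Real.arcosh_le_two_mul_sqrt {x : ℝ} (hx : 1 ≤ x) : arcosh x ≤ 2 * √(x ^ 2 - 1) := by
  have hsub : x - 1 ≤ √(x ^ 2 - 1) := le_sqrt_of_sq_le (by nlinarith)
  calc arcosh x ≤ x + √(x ^ 2 - 1) - 1 := log_le_sub_one_of_pos (by positivity)
    _ ≤ 2 * √(x ^ 2 - 1) := by linarith

namespace Polynomial.Chebyshev

lemma eval_T_real_le_exp_mul_arcosh (n : ℕ) {x : ℝ} (hx : 1 ≤ x) :
    (T ℝ n).eval x ≤ exp (n * arcosh x) :=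
  calc (T ℝ n).eval x = cosh (n * arcosh x) := by
        simpa [cosh_arcosh hx] using T_real_cosh (arcosh x) n
    _ ≤ exp (n * arcosh x) := cosh_le_exp_of_nonneg (by positivity [arcosh_nonneg hx])

lemma eval_T_real_one_add_le (n : ℕ) {μ : ℝ} (hμ : 0 ≤ μ) :
    (T ℝ n).eval (1 + μ) ≤ exp (2 * n * √(2 * μ + μ ^ 2)) := by
  have hx : 1 ≤ 1 + μ := by linarith
  calc (T ℝ n).eval (1 + μ) ≤ exp (n * arcosh (1 + μ)) := eval_T_real_le_exp_mul_arcosh n hx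
    _ ≤ exp (n * (2 * √((1 + μ) ^ 2 - 1))) := by gcongr; exact arcosh_le_two_mul_sqrt hx
    _ = exp (2 * n * √(2 * μ + μ ^ 2)) := by ring_nf

lemma eval_le_mul_eval_T_real_of_forall_abs_le {n : ℕ} {P : ℝ[X]} {B : ℝ} (hB : 0 < B)
    (hPdeg : P.degree ≤ n) (hPbnd : ∀ x ∈ Set.Icc (-1) 1, |P.eval x| ≤ B) {x : ℝ} (hx : 1 ≤ x) :
    P.eval x ≤ B * (T ℝ n).eval x := by
  have hdeg : (Polynomial.C B⁻¹ * P).degree ≤ n := (degree_C_mul (inv_ne_zero hB.ne')).trans_le hPdeg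
  have hbnd : ∀ y ∈ Set.Icc (-1) 1, |(Polynomial.C B⁻¹ * P).eval y| ≤ 1 := fun y hy => by
    rw [eval_mul, eval_C, abs_mul, abs_inv, abs_of_pos hB, inv_mul_le_iff₀ hB, mul_one]
    exact hPbnd y hy
  have hle := eval_iterate_derivative_le_of_forall_abs_le_one (k := 0) hx hdeg hbnd
  simp only [Function.iterate_zero, id, eval_mul, eval_C] at hle
  rwa [inv_mul_le_iff₀ hB] at hle

end Polynomial.Chebyshev

theorem error_lower_bound_from_chebyshev (q : Polynomial ℝ) (d : ℕ) (ε M μ : ℝ)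
    (hε : 0 < ε) (hM : 0 < M) (hμ : 0 < μ)
    (hdeg : q.degree ≤ d)
    (hbound : ∀ x : ℝ, x ∈ Set.Icc (-1 : ℝ) 1 → |q.eval x| ≤ ε * M)
    (hval : q.eval (1 + μ) = 1) :
    1 ≤ ε * M * Real.exp (2 * d * Real.sqrt (2 * μ + μ ^ 2)) :=
  calc 1 = q.eval (1 + μ) := hval.symm
    _ ≤ ε * M * (T ℝ d).eval (1 + μ) :=
        eval_le_mul_eval_T_real_of_forall_abs_le (mul_pos hε hM) hdeg hbound (by linarith)
    _ ≤ ε * M * exp (2 * d * √(2 * μ + μ ^ 2)) := by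
        gcongr
        exact eval_T_real_one_add_le d hμ.le
end

section
/- Suppose s is a real polynomial of degree d < N with s(0) = 0 and 1−ε ≤ s(x) ≤ 1 for all integers x in [1, N]. Assume the Coppersmith–Rivlin bound: there exist positive constants a, b such that any polynomial of degree d bounded by 1 in absolute value at all integers in [0, n] with n ≥ δd² is bounded by a·e^{b/δ} on all of [0,n]. Then ε ≥ (1/a)·e^{−b d²/(N−1) − 4d√N/(N−1)}. -/
/-!
Shift and normalise the success polynomial: `q x = (1 - s (x + 1)) / ε` has degree at most `d`,
is bounded by `1` at the integers `0, …, N - 1`, and `q (-1) = 1 / ε`. The Coppersmith–Rivlin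
bound with `δ = (N - 1) / d²` bounds `|q|` by `a e^{b d² / (N - 1)}` on the whole interval
`[0, N - 1]`. Rescaled to `[-1, 1]`, the point `-1` becomes `x = 1 + 2 / (N - 1)`, and Chebyshev's
extremal property bounds `q (-1)` by that constant times `T_d x ≤ (x + √(x² - 1))^d`, which is at
most `e^{4 d √N / (N - 1)}`.
-/

open Polynomial Real

lemma Real.cosh_le_exp_abs (t : ℝ) : cosh t ≤ exp |t| := by
  rw [← cosh_abs, cosh_eq]
  have : exp (-|t|) ≤ exp |t| := exp_le_exp.mpr (by linarith [abs_nonneg t])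
  linarith

namespace Polynomial.Chebyshev

theorem eval_T_real_le_pow {x : ℝ} (hx : 1 ≤ x) (n : ℕ) :
    (T ℝ n).eval x ≤ (x + √(x ^ 2 - 1)) ^ n := by
  calc (T ℝ n).eval x = cosh (n * arcosh x) := by
        simpa [cosh_arcosh hx] using T_real_cosh (arcosh x) n
    _ ≤ exp (n * arcosh x) := by
        simpa [abs_of_nonneg (mul_nonneg n.cast_nonneg (arcosh_nonneg hx))]
          using cosh_le_exp_abs (n * arcosh x)
    _ = (x + √(x ^ 2 - 1)) ^ n := by rw [exp_nat_mul, exp_arcosh hx]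

theorem eval_le_mul_eval_T_of_forall_abs_le {n : ℕ} {P : ℝ[X]} {A x : ℝ} (hA : 0 < A)
    (hPdeg : P.degree ≤ n) (hPbnd : ∀ y ∈ Set.Icc (-1) 1, |P.eval y| ≤ A) (hx : 1 ≤ x) :
    P.eval x ≤ A * (T ℝ n).eval x := by
  have h := eval_iterate_derivative_le_of_forall_abs_le_one (k := 0) (P := A⁻¹ • P) hx
    ((degree_smul_le _ _).trans hPdeg) fun y hy => by
      rw [eval_smul, smul_eq_mul, abs_mul, abs_inv, abs_of_pos hA, inv_mul_le_one₀ hA]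
      exact hPbnd y hy
  rwa [Function.iterate_zero_apply, Function.iterate_zero_apply, eval_smul, smul_eq_mul,
    inv_mul_le_iff₀ hA] at h

theorem eval_le_mul_eval_T_of_forall_abs_le_Icc_zero {n : ℕ} {P : ℝ[X]} {A m x : ℝ} (hA : 0 < A)
    (hm : 0 < m) (hPdeg : P.degree ≤ n) (hPbnd : ∀ y ∈ Set.Icc 0 m, |P.eval y| ≤ A)
    (hx : x ≤ 0) : P.eval x ≤ A * (T ℝ n).eval (1 - 2 * x / m) := by
  set Q := P.comp ((m / 2) • (1 - X))
  have hQ : ∀ y, Q.eval y = P.eval (m / 2 * (1 - y)) := by simp [Q]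
  have hQdeg : Q.degree ≤ n := by
    refine degree_le_of_natDegree_le (natDegree_comp_le.trans ?_)
    have : ((m / 2) • (1 - X) : ℝ[X]).natDegree ≤ 1 := by compute_degree
    nlinarith [natDegree_le_of_degree_le hPdeg]
  have := eval_le_mul_eval_T_of_forall_abs_le (x := 1 - 2 * x / m) hA hQdeg (fun y hy => by
    rw [hQ]; exact hPbnd _ ⟨by nlinarith [hy.2], by nlinarith [hy.1]⟩)
    (by linarith [div_nonpos_of_nonpos_of_nonneg (by linarith : 2 * x ≤ 0) hm.le])
  rwa [hQ, show m / 2 * (1 - (1 - 2 * x / m)) = x by field_simp; ring] at this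

theorem eval_T_one_add_two_div_le_exp {m : ℝ} (hm : 0 < m) (n : ℕ) :
    (T ℝ n).eval (1 + 2 / m) ≤ exp (4 * n * √(m + 1) / m) := by
  have hsq : √((1 + 2 / m) ^ 2 - 1) = 2 * √(m + 1) / m := by
    rw [show (1 + 2 / m) ^ 2 - 1 = (2 / m) ^ 2 * (m + 1) by field_simp; ring,
      sqrt_mul' _ (by linarith), sqrt_sq (by positivity)]
    ring
  have hone : 1 ≤ √(m + 1) := one_le_sqrt.mpr (by linarith)
  calc (T ℝ n).eval (1 + 2 / m) ≤ (1 + 2 / m + √((1 + 2 / m) ^ 2 - 1)) ^ n :=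
        eval_T_real_le_pow (by linarith [div_pos two_pos hm]) n
    _ ≤ exp (4 * √(m + 1) / m) ^ n := by
        gcongr
        have : 2 / m ≤ 2 * √(m + 1) / m := by gcongr; linarith
        linarith [add_one_le_exp (4 * √(m + 1) / m), hsq.le,
          show 4 * √(m + 1) / m = 2 * √(m + 1) / m + 2 * √(m + 1) / m by ring]
    _ = exp (4 * n * √(m + 1) / m) := by rw [← exp_nat_mul]; ring_nf

end Polynomial.Chebyshev

open Polynomial.Chebyshev

def CoppersmithRivlinBound (a b : ℝ) : Prop :=
  ∀ (p : ℝ[X]) (n : ℕ) (δ : ℝ), 0 < δ → δ * (p.natDegree : ℝ) ^ 2 ≤ n →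
    (∀ k : ℕ, k ≤ n → |p.eval (k : ℝ)| ≤ 1) →
    ∀ x : ℝ, 0 ≤ x → x ≤ n → |p.eval x| < a * exp (b / δ)

namespace CoppersmithRivlinBound

variable {a b : ℝ} {p : ℝ[X]} {n d : ℕ}

theorem abs_eval_lt (hCR : CoppersmithRivlinBound a b) (hn : 0 < n) (hd : d ≠ 0)
    (hp : p.natDegree ≤ d) (hint : ∀ k : ℕ, k ≤ n → |p.eval (k : ℝ)| ≤ 1) :
    ∀ x ∈ Set.Icc 0 (n : ℝ), |p.eval x| < a * exp (b * d ^ 2 / n) := by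
  have hδ : 0 < (n : ℝ) / d ^ 2 := by positivity
  intro x hx
  rw [← div_div_eq_mul_div]
  refine hCR p n _ hδ ?_ hint x hx.1 hx.2
  calc (n : ℝ) / d ^ 2 * (p.natDegree : ℝ) ^ 2 ≤ n / d ^ 2 * d ^ 2 := by gcongr
    _ = (n : ℝ) := div_mul_cancel₀ _ (by positivity)

theorem eval_neg_one_le (hCR : CoppersmithRivlinBound a b) (ha : 0 < a) (hn : 0 < n)
    (hd : d ≠ 0) (hp : p.natDegree ≤ d) (hint : ∀ k : ℕ, k ≤ n → |p.eval (k : ℝ)| ≤ 1) :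
    p.eval (-1) ≤ a * exp (b * d ^ 2 / n + 4 * d * √(n + 1) / n) := by
  have hn' : (0 : ℝ) < n := by exact_mod_cast hn
  calc p.eval (-1) ≤ a * exp (b * d ^ 2 / n) * (T ℝ d).eval (1 - 2 * (-1) / n : ℝ) :=
        eval_le_mul_eval_T_of_forall_abs_le_Icc_zero (by positivity) hn'
          (degree_le_of_natDegree_le hp) (fun x hx => (hCR.abs_eval_lt hn hd hp hint x hx).le)
          (by norm_num)
    _ ≤ a * exp (b * d ^ 2 / n) * exp (4 * d * √(n + 1) / n) := by
        rw [show 1 - 2 * (-1) / (n : ℝ) = 1 + 2 / n by ring]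
        gcongr
        exact eval_T_one_add_two_div_le_exp hn' d
    _ = a * exp (b * d ^ 2 / n + 4 * d * √(n + 1) / n) := by rw [exp_add, mul_assoc]

end CoppersmithRivlinBound

lemma abs_inv_mul_one_sub_le_one {ε v : ℝ} (hε : 0 < ε) (hv : 1 - ε ≤ v ∧ v ≤ 1) :
    |ε⁻¹ * (1 - v)| ≤ 1 := by
  rw [abs_of_nonneg (mul_nonneg (inv_nonneg.mpr hε.le) (by linarith)), inv_mul_le_one₀ hε]
  linarith

theorem quantum_search_error_lower_bound_general (N d : ℕ) (hN : 2 ≤ N) (hd : 1 ≤ d)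
    (ε : ℝ) (hε : 0 < ε) (s : Polynomial ℝ)
    (hdeg : s.degree ≤ d)
    (hs0 : s.eval 0 = 0)
    (hs : ∀ x : ℕ, 1 ≤ x → x ≤ N → 1 - ε ≤ s.eval (x : ℝ) ∧ s.eval (x : ℝ) ≤ 1)
    (a b : ℝ) (ha : 0 < a)
    (hCR : ∀ (p : Polynomial ℝ) (n : ℕ) (δ : ℝ), 0 < δ →
      δ * (p.natDegree : ℝ) ^ 2 ≤ n →
      (∀ k : ℕ, k ≤ n → |p.eval (k : ℝ)| ≤ 1) →
      ∀ x : ℝ, 0 ≤ x → x ≤ n → |p.eval x| < a * Real.exp (b / δ)) :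
    ε ≥ (1 / a) * Real.exp (-(b * d ^ 2 / (N - 1)) - 4 * d * Real.sqrt N / (N - 1)) := by
  set q : ℝ[X] := C ε⁻¹ * (1 - s.comp (X + 1))
  have hq_eval (x : ℝ) : q.eval x = ε⁻¹ * (1 - s.eval (x + 1)) := by simp [q, eval_comp]
  have hq_deg : q.natDegree ≤ d := by
    have hX : (X + 1 : ℝ[X]).natDegree ≤ 1 := by compute_degree
    have hcomp : (s.comp (X + 1)).natDegree ≤ d :=
      natDegree_comp_le.trans (by nlinarith [natDegree_le_of_degree_le hdeg])
    simp only [q]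
    compute_degree
    exact hcomp
  have hq_int (k : ℕ) (hk : k ≤ N - 1) : |q.eval (k : ℝ)| ≤ 1 := by
    rw [hq_eval]
    exact_mod_cast abs_inv_mul_one_sub_le_one hε (hs (k + 1) (by omega) (by omega))
  have hbound := CoppersmithRivlinBound.eval_neg_one_le hCR ha (by omega) (by omega) hq_deg hq_int
  rw [hq_eval, neg_add_cancel, hs0, sub_zero, mul_one, Nat.cast_pred (by omega),
    sub_add_cancel] at hbound
  rw [ge_iff_le, one_div, sub_eq_add_neg, ← neg_add, exp_neg, ← mul_inv]
  exact inv_le_of_inv_le₀ hε hbound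

theorem quantum_search_error_lower_bound (N d : ℕ) (hN : 2 ≤ N) (hd : 1 ≤ d) (hdN : d < N)
    (ε : ℝ) (hε : 0 < ε) (s : Polynomial ℝ)
    (hdeg : s.degree ≤ d)
    (hs0 : s.eval 0 = 0)
    (hs : ∀ x : ℕ, 1 ≤ x → x ≤ N → 1 - ε ≤ s.eval (x : ℝ) ∧ s.eval (x : ℝ) ≤ 1)
    (a b : ℝ) (ha : 0 < a) (hb : 0 < b)
    (hCR : ∀ (p : Polynomial ℝ) (n : ℕ) (δ : ℝ), 0 < δ →
      δ * (p.natDegree : ℝ) ^ 2 ≤ n →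
      (∀ k : ℕ, k ≤ n → |p.eval (k : ℝ)| ≤ 1) →
      ∀ x : ℝ, 0 ≤ x → x ≤ n → |p.eval x| < a * Real.exp (b / δ)) :
    ε ≥ (1 / a) * Real.exp (-(b * d ^ 2 / (N - 1)) - 4 * d * Real.sqrt N / (N - 1)) :=
  quantum_search_error_lower_bound_general N d hN hd ε hε s hdeg hs0 hs a b ha hCR
end

section
/- For any real polynomial P in N variables of degree at most d, there exists a single-variate real polynomial Q of degree at most d such that for all X ∈ {0,1}^N, the average of P over all permutations of the coordinates of X equals Q(|X|), where |X| is the Hamming weight of X. -/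
open Finset

private lemma mp_bool_sq {x : ℝ} (hx : x = 0 ∨ x = 1) : x * x = x := by
  rcases hx with h | h <;> subst h <;> ring

private lemma mp_absorb {N : ℕ} (X : Fin N → ℝ) (hX : ∀ i, X i = 0 ∨ X i = 1)
    (π : Equiv.Perm (Fin N)) {S : Finset (Fin N)} {b : Fin N} (hb : b ∈ S) :
    X (π b) * ∏ i ∈ S, X (π i) = ∏ i ∈ S, X (π i) := by
  rw [← Finset.mul_prod_erase S _ hb, ← mul_assoc, mp_bool_sq (hX (π b))]

private lemma mp_step {N : ℕ} (X : Fin N → ℝ) (hX : ∀ i, X i = 0 ∨ X i = 1)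
    (S : Finset (Fin N)) (a : Fin N) (ha : a ∉ S) :
    (Sᶜ.card : ℝ) * ∑ π : Equiv.Perm (Fin N), ∏ i ∈ insert a S, X (π i)
      = ((∑ i, X i) - S.card) * ∑ π : Equiv.Perm (Fin N), ∏ i ∈ S, X (π i) := by
  have key : ∀ b ∈ Sᶜ, (∑ π : Equiv.Perm (Fin N), X (π b) * ∏ i ∈ S, X (π i))
      = ∑ π : Equiv.Perm (Fin N), X (π a) * ∏ i ∈ S, X (π i) := by
    intro b hb
    rw [Finset.mem_compl] at hb
    have := Equiv.sum_comp (Equiv.mulRight (Equiv.swap a b))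
      (fun π : Equiv.Perm (Fin N) => X (π a) * ∏ i ∈ S, X (π i))
    rw [← this]
    refine Finset.sum_congr rfl fun π _ => ?_
    simp only [Equiv.coe_mulRight, Equiv.Perm.mul_apply]
    rw [Equiv.swap_apply_left]
    congr 1
    refine Finset.prod_congr rfl fun i hi => ?_
    rw [Equiv.swap_apply_of_ne_of_ne (by rintro rfl; exact ha hi) (by rintro rfl; exact hb hi)]
  calc (Sᶜ.card : ℝ) * ∑ π : Equiv.Perm (Fin N), ∏ i ∈ insert a S, X (π i)
      = ∑ b ∈ Sᶜ, ∑ π : Equiv.Perm (Fin N), X (π b) * ∏ i ∈ S, X (π i) := by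
        rw [Finset.sum_congr rfl key, Finset.sum_const, nsmul_eq_mul]
        congr 1
        exact Finset.sum_congr rfl fun π _ => Finset.prod_insert ha
    _ = ∑ π : Equiv.Perm (Fin N), (∑ b ∈ Sᶜ, X (π b)) * ∏ i ∈ S, X (π i) := by
        rw [Finset.sum_comm]
        exact Finset.sum_congr rfl fun π _ => (Finset.sum_mul _ _ _).symm
    _ = ((∑ i, X i) - S.card) * ∑ π : Equiv.Perm (Fin N), ∏ i ∈ S, X (π i) := by
        rw [Finset.mul_sum]
        refine Finset.sum_congr rfl fun π _ => ?_
        have h1 : ∑ b ∈ Sᶜ, X (π b) = (∑ i, X i) - ∑ b ∈ S, X (π b) := by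
          have := Finset.sum_add_sum_compl S (fun b => X (π b))
          have h2 : ∑ b : Fin N, X (π b) = ∑ i, X i := Equiv.sum_comp π X
          linarith
        rw [h1, sub_mul, sub_mul]
        congr 1
        rw [Finset.sum_mul]
        rw [Finset.sum_congr rfl (fun b hb => mp_absorb X hX π hb), Finset.sum_const,
          nsmul_eq_mul]

private lemma mp_count {N : ℕ} (X : Fin N → ℝ) (hX : ∀ i, X i = 0 ∨ X i = 1)
    (S : Finset (Fin N)) :
    ∑ π : Equiv.Perm (Fin N), ∏ i ∈ S, X (π i)
      = ((N - S.card).factorial : ℝ) * ∏ k ∈ Finset.range S.card, ((∑ i, X i) - k) := by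
  induction S using Finset.induction_on with
  | empty =>
      simp [Fintype.card_perm, Finset.card_univ]
  | @insert a S ha ih =>
      have hslt : S.card < N := by
        have := Finset.card_le_univ (insert a S)
        simp [Finset.card_insert_of_notMem ha, Fintype.card_fin] at this
        omega
      have hcompl : Sᶜ.card = N - S.card := by
        rw [Finset.card_compl, Fintype.card_fin]
      have hstep := mp_step X hX S a ha
      rw [hcompl, ih] at hstep
      have hfac : (N - S.card).factorial = (N - S.card) * (N - (S.card + 1)).factorial := by
        have h1 : N - S.card = (N - (S.card + 1)) + 1 := by omega
        rw [h1, Nat.factorial_succ]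
      have hne : ((N - S.card : ℕ) : ℝ) ≠ 0 := by
        have : 0 < N - S.card := by omega
        exact_mod_cast this.ne'
      rw [Finset.card_insert_of_notMem ha]
      refine mul_left_cancel₀ hne ?_
      rw [hstep, hfac, Finset.prod_range_succ]
      push_cast
      ring

theorem minsky_papert_symmetrization (N d : ℕ) (P : MvPolynomial (Fin N) ℝ)
    (hdeg : P.totalDegree ≤ d) :
    ∃ Q : Polynomial ℝ, Q.natDegree ≤ d ∧
      ∀ X : Fin N → ℝ, (∀ i, X i = 0 ∨ X i = 1) →
        (1 / (N.factorial : ℝ)) *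
          ∑ π : Equiv.Perm (Fin N), MvPolynomial.eval (fun i => X (π i)) P
        = Q.eval (∑ i, X i) := by
  refine ⟨∑ m ∈ P.support, Polynomial.C
      (1 / (N.factorial : ℝ) * (P.coeff m * ((N - m.support.card).factorial : ℝ))) *
      ∏ k ∈ Finset.range m.support.card, (Polynomial.X - Polynomial.C (k : ℝ)), ?_, ?_⟩
  · -- degree bound
    refine Polynomial.natDegree_sum_le_of_forall_le _ _ fun m hm => ?_
    refine le_trans (Polynomial.natDegree_C_mul_le _ _) ?_
    refine le_trans (Polynomial.natDegree_prod_le _ _) ?_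
    refine le_trans (Finset.sum_le_card_nsmul _ _ 1 fun k _ =>
      Polynomial.natDegree_X_sub_C_le _) ?_
    simp only [Finset.card_range, smul_eq_mul, mul_one]
    -- m.support.card ≤ d
    have h1 : m.support.card ≤ m.sum fun _ e => e := by
      rw [Finsupp.sum]
      calc m.support.card = ∑ i ∈ m.support, 1 := by simp
        _ ≤ ∑ i ∈ m.support, m i :=
          Finset.sum_le_sum fun i hi => Nat.one_le_iff_ne_zero.mpr (Finsupp.mem_support_iff.mp hi)
    exact le_trans h1 (le_trans (MvPolynomial.le_totalDegree hm) hdeg)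
  · intro X hX
    have heval : ∀ π : Equiv.Perm (Fin N),
        MvPolynomial.eval (fun i => X (π i)) P
          = ∑ m ∈ P.support, P.coeff m * ∏ i ∈ m.support, X (π i) := by
      intro π
      rw [MvPolynomial.eval_eq]
      refine Finset.sum_congr rfl fun m _ => ?_
      congr 1
      refine Finset.prod_congr rfl fun i hi => ?_
      rcases hX (π i) with h | h <;>
        rw [h] <;> simp [zero_pow (Finsupp.mem_support_iff.mp hi)]
    rw [Finset.sum_congr rfl fun π _ => heval π, Finset.sum_comm]
    rw [Polynomial.eval_finset_sum, Finset.mul_sum]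
    refine Finset.sum_congr rfl fun m _ => ?_
    rw [← Finset.mul_sum, mp_count X hX m.support]
    rw [Polynomial.eval_mul, Polynomial.eval_C, Polynomial.eval_prod]
    simp only [Polynomial.eval_sub, Polynomial.eval_X, Polynomial.eval_C]
    ring
end

section
/- Let A be a unitary operator on a Hilbert space H with A|j,0,0̄⟩ = α₀|j,x_j⟩|V₀⟩ + α₁|j,x̄_j⟩|V₁⟩ where |α₁|² ≤ ε and |V₀⟩, |V₁⟩ are unit vectors. Define A' = (I ⊗ A⁻¹) ∘ CNOT ∘ (I ⊗ A) where CNOT maps |b,j,x,w⟩ ↦ |b⊕x, j, x, w⟩ (acting with b as an extra control register). Then A'|b⟩|j,0,0̄⟩ = |b⊕x_j⟩|j,0,0̄⟩ + |W⟩ with ‖|W⟩‖ = √(2|α₁|²) ≤ √(2ε). -/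
/-- The embedding `|b⟩ ⊗ w` of a workspace vector `w` into the space
`ℂ² ⊗ E`, modeled as `PiLp 2 (fun _ : Bool => E)`. -/
noncomputable def emb {E : Type*} [NormedAddCommGroup E] [InnerProductSpace ℂ E]
    (b : Bool) (w : E) : PiLp 2 (fun _ : Bool => E) :=
  WithLp.toLp 2 (fun c => if c = b then w else 0)

/-!
Write `A ψ₀ = α₀ • v₀ + α₁ • v₁` and `u = A⁻¹ (α₁ • v₁)`, so that
`A⁻¹ (α₀ • v₀) = ψ₀ - u`. The copy `G` sends the good branch to register `b ⊕ x_j` and the bad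
one to `b ⊕ x̄_j`, so after uncomputing the state is `|b ⊕ x_j⟩ (ψ₀ - u) + |b ⊕ x̄_j⟩ u`. The error
`|b ⊕ x̄_j⟩ u - |b ⊕ x_j⟩ u` consists of two copies of `u` in distinct registers, of norm
`√2 ‖u‖ = √2 |α₁|`.
-/

namespace PiLp

variable {ι 𝕜 E : Type*} [DecidableEq ι]

theorem single_smul [NormedField 𝕜] [SeminormedAddCommGroup E] [NormedSpace 𝕜 E]
    (p : ENNReal) (i : ι) (a : 𝕜) (v : E) :
    (single p i (a • v) : PiLp p fun _ : ι => E) = a • single p i v := by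
  simp_rw [← toLp_single, Pi.single_smul', WithLp.toLp_smul]

theorem norm_single_sub_single_of_ne [Fintype ι] [SeminormedAddCommGroup E] {i j : ι} (h : i ≠ j)
    (v : E) :
    ‖(single 2 i v - single 2 j v : PiLp 2 fun _ : ι => E)‖ = √2 * ‖v‖ := by
  have hcoord : ∀ k, ‖(single 2 i v - single 2 j v : PiLp 2 fun _ : ι => E) k‖ ^ 2 =
      (Pi.single i (‖v‖ ^ 2) : ι → ℝ) k + (Pi.single j (‖v‖ ^ 2) : ι → ℝ) k := by
    intro k
    by_cases hi : k = i
    · subst hi; simp [h]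
    · by_cases hj : k = j
      · subst hj; simp [hi]
      · simp [hi, hj]
  rw [← Real.sqrt_sq (norm_nonneg _), norm_sq_eq_of_L2]
  simp only [hcoord, Finset.sum_add_distrib, Finset.sum_pi_single', Finset.mem_univ, if_true]
  rw [← two_mul, Real.sqrt_mul zero_le_two, Real.sqrt_sq (norm_nonneg _)]

end PiLp

theorem emb_eq_single {E : Type*} [NormedAddCommGroup E] [InnerProductSpace ℂ E]
    (b : Bool) (w : E) : emb b w = PiLp.single 2 b w :=
  PiLp.ext fun c => by simp [emb]

namespace LinearIsometryEquiv

theorem piLpCongrRight_conj_single {ι 𝕜 E : Type*} [Fintype ι] [DecidableEq ι] [NormedField 𝕜]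
    [SeminormedAddCommGroup E] [NormedSpace 𝕜 E] (p : ENNReal) [Fact (1 ≤ p)] (A : E ≃ₗᵢ[𝕜] E)
    (G : PiLp p (fun _ : ι => E) ≃ₗᵢ[𝕜] PiLp p (fun _ : ι => E))
    {ψ v₀ v₁ : E} {α₀ α₁ : 𝕜} {b c₀ c₁ : ι} (hA : A ψ = α₀ • v₀ + α₁ • v₁)
    (hG₀ : G (PiLp.single p b v₀) = PiLp.single p c₀ v₀)
    (hG₁ : G (PiLp.single p b v₁) = PiLp.single p c₁ v₁) :
    (LinearIsometryEquiv.piLpCongrRight p fun _ => A).symm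
        (G (LinearIsometryEquiv.piLpCongrRight p (fun _ => A) (PiLp.single p b ψ))) =
      (PiLp.single p c₀ (A.symm (α₀ • v₀)) + PiLp.single p c₁ (A.symm (α₁ • v₁)) :
        PiLp p fun _ : ι => E) := by
  rw [piLpCongrRight_single, hA, PiLp.single_add, PiLp.single_smul, PiLp.single_smul, map_add,
    map_smul, map_smul, hG₀, hG₁, piLpCongrRight_symm, map_add, map_smul, map_smul,
    piLpCongrRight_single, piLpCongrRight_single, map_smul, map_smul, PiLp.single_smul,
    PiLp.single_smul]

end LinearIsometryEquiv

theorem compute_copy_uncompute_cleanup_general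
    {E : Type*} [NormedAddCommGroup E] [InnerProductSpace ℂ E]
    (xj : Bool) (b : Bool) (ε : ℝ)
    (α₀ α₁ : ℂ) (hα₁ : ‖α₁‖ ^ 2 ≤ ε)
    (A : E ≃ₗᵢ[ℂ] E) (ψ₀ v₀ v₁ : E)
    (hv₁ : ‖v₁‖ = 1)
    (hA : A ψ₀ = α₀ • v₀ + α₁ • v₁)
    (G : PiLp 2 (fun _ : Bool => E) ≃ₗᵢ[ℂ] PiLp 2 (fun _ : Bool => E))
    (hG₀ : ∀ c : Bool, G (emb c v₀) = emb (xor c xj) v₀)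
    (hG₁ : ∀ c : Bool, G (emb c v₁) = emb (xor c (!xj)) v₁) :
    ∃ W : PiLp 2 (fun _ : Bool => E),
      (fun φ : PiLp 2 (fun _ : Bool => E) =>
          (WithLp.toLp 2 (fun c => A.symm ((G (WithLp.toLp 2 (fun c' => A (φ c')))) c)) : PiLp 2 (fun _ : Bool => E)))
        (emb b ψ₀) = emb (xor b xj) ψ₀ + W ∧
      ‖W‖ = Real.sqrt (2 * ‖α₁‖ ^ 2) ∧ ‖W‖ ≤ Real.sqrt (2 * ε) := by
  set u := A.symm (α₁ • v₁)
  have hu : ‖u‖ = ‖α₁‖ := by rw [LinearIsometryEquiv.norm_map, norm_smul, hv₁, mul_one]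
  have hψ₀ : A.symm (α₀ • v₀) = ψ₀ - u := by
    rw [eq_sub_iff_add_eq, ← map_add, ← hA, LinearIsometryEquiv.symm_apply_apply]
  have hflip : xor b (!xj) ≠ xor b xj := by cases b <;> cases xj <;> decide
  have hW : ‖(PiLp.single 2 (xor b (!xj)) u - PiLp.single 2 (xor b xj) u :
      PiLp 2 fun _ : Bool => E)‖ = Real.sqrt (2 * ‖α₁‖ ^ 2) := by
    rw [PiLp.norm_single_sub_single_of_ne hflip, hu, Real.sqrt_mul zero_le_two,
      Real.sqrt_sq (norm_nonneg _)]
  refine ⟨_, ?_, hW, hW ▸ Real.sqrt_le_sqrt (by linarith)⟩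
  simp only [emb_eq_single] at hG₀ hG₁ ⊢
  change (LinearIsometryEquiv.piLpCongrRight 2 fun _ => A).symm
    (G (LinearIsometryEquiv.piLpCongrRight 2 (fun _ => A) (PiLp.single 2 b ψ₀))) = _
  rw [LinearIsometryEquiv.piLpCongrRight_conj_single 2 A G hA (hG₀ b) (hG₁ b), hψ₀,
    PiLp.single_sub]
  abel

theorem compute_copy_uncompute_cleanup
    {E : Type*} [NormedAddCommGroup E] [InnerProductSpace ℂ E]
    (xj : Bool) (b : Bool) (ε : ℝ) (hε : 0 ≤ ε)
    (α₀ α₁ : ℂ) (hnorm : ‖α₀‖ ^ 2 + ‖α₁‖ ^ 2 = 1) (hα₁ : ‖α₁‖ ^ 2 ≤ ε)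
    (A : E ≃ₗᵢ[ℂ] E) (ψ₀ v₀ v₁ : E)
    (hv₀ : ‖v₀‖ = 1) (hv₁ : ‖v₁‖ = 1) (hv : inner ℂ v₀ v₁ = (0 : ℂ))
    (hA : A ψ₀ = α₀ • v₀ + α₁ • v₁)
    (G : PiLp 2 (fun _ : Bool => E) ≃ₗᵢ[ℂ] PiLp 2 (fun _ : Bool => E))
    (hG₀ : ∀ c : Bool, G (emb c v₀) = emb (xor c xj) v₀)
    (hG₁ : ∀ c : Bool, G (emb c v₁) = emb (xor c (!xj)) v₁) :
    ∃ W : PiLp 2 (fun _ : Bool => E),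
      (fun φ : PiLp 2 (fun _ : Bool => E) =>
          (WithLp.toLp 2 (fun c => A.symm ((G (WithLp.toLp 2 (fun c' => A (φ c')))) c)) : PiLp 2 (fun _ : Bool => E)))
        (emb b ψ₀) = emb (xor b xj) ψ₀ + W ∧
      ‖W‖ = Real.sqrt (2 * ‖α₁‖ ^ 2) ∧ ‖W‖ ≤ Real.sqrt (2 * ε) :=
  compute_copy_uncompute_cleanup_general xj b ε α₀ α₁ hα₁ A ψ₀ v₀ v₁ hv₁ hA G hG₀ hG₁
end
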